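/- Let K = ℚ(q1,q2). The quotient ring K[x,y]/(x³ − 4q1(x+y), y³ − 4q2(x+y)) is a K-vector space of dimension 9. -/

import Mathlib

open MvPolynomial

/-- `K = ℚ(q1, q2)`. -/
abbrev Kq : Type := FractionRing (MvPolynomial (Fin 2) ℚ)

noncomputable def q1 : Kq := algebraMap (MvPolynomial (Fin 2) ℚ) Kq (X 0)
noncomputable def q2 : Kq := algebraMap (MvPolynomial (Fin 2) ℚ) Kq (X 1)

/-- `x^3 - 4 q1 (x + y)` in `K[x, y]`. -/
noncomputable def f1 : MvPolynomial (Fin 2) Kq :=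
  X 0 ^ 3 - C (4 * q1) * (X 0 + X 1)

/-- `y^3 - 4 q2 (x + y)` in `K[x, y]`. -/
noncomputable def f2 : MvPolynomial (Fin 2) Kq :=
  X 1 ^ 3 - C (4 * q2) * (X 0 + X 1)

/-!
Since `q1` is a unit, `f1 = -4 q1 (y - g(x))` with `g(x) = x³ / (4 q1) - x`, so substituting
`y := g(x)` identifies `K[x,y] / (f1, f2)` with `K[x] / (f2(x, g(x)))`. The leading term of
`f2(x, g(x))` is `(x³ / (4 q1))³`, so it has degree 9, which is the dimension of the quotient.
-/

namespace MvPolynomial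

variable {R : Type*} [CommRing R]

noncomputable def substY (g : Polynomial R) : MvPolynomial (Fin 2) R →ₐ[R] Polynomial R :=
  aeval ![Polynomial.X, g]

theorem substY_aeval_X_zero (g p : Polynomial R) : substY g (Polynomial.aeval (X 0) p) = p := by
  have hcomp : (substY g).comp (Polynomial.aeval (X 0)) = AlgHom.id R (Polynomial R) :=
    Polynomial.algHom_ext (by simp [substY])
  exact AlgHom.congr_fun hcomp p

theorem substY_surjective (g : Polynomial R) : Function.Surjective (substY g) :=
  fun p => ⟨Polynomial.aeval (X 0) p, substY_aeval_X_zero g p⟩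

theorem sub_aeval_X_zero_substY_mem (g : Polynomial R) (p : MvPolynomial (Fin 2) R) :
    p - Polynomial.aeval (X 0) (substY g p) ∈
      Ideal.span {X 1 - Polynomial.aeval (X 0 : MvPolynomial (Fin 2) R) g} := by
  rw [← Ideal.Quotient.eq, ← Ideal.Quotient.mkₐ_eq_mk R, ← AlgHom.comp_apply,
    ← AlgHom.comp_apply]
  congr 1
  refine algHom_ext fun i => ?_
  fin_cases i
  · simp [substY]
  · simp [substY, Ideal.Quotient.eq]

theorem ker_substY (g : Polynomial R) :
    RingHom.ker (substY g) =
      Ideal.span {X 1 - Polynomial.aeval (X 0 : MvPolynomial (Fin 2) R) g} := by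
  refine le_antisymm (fun p hp => ?_) ?_
  · simpa [RingHom.mem_ker.mp hp] using sub_aeval_X_zero_substY_mem g p
  · rw [Ideal.span_le, Set.singleton_subset_iff, SetLike.mem_coe, RingHom.mem_ker, map_sub,
      substY_aeval_X_zero]
    simp [substY]

theorem ker_mk_comp_substY (g : Polynomial R) (f : MvPolynomial (Fin 2) R) :
    RingHom.ker ((Ideal.Quotient.mkₐ R (Ideal.span {substY g f})).comp (substY g)) =
      Ideal.span {X 1 - Polynomial.aeval (X 0 : MvPolynomial (Fin 2) R) g, f} := by
  ext p
  rw [RingHom.mem_ker, AlgHom.comp_apply, Ideal.Quotient.mkₐ_eq_mk,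
    Ideal.Quotient.eq_zero_iff_mem, ← Ideal.mem_comap, ← Set.image_singleton,
    ← Ideal.map_span, Ideal.comap_map_of_surjective _ (substY_surjective g),
    ← RingHom.ker_eq_comap_bot, ker_substY, sup_comm, ← Ideal.span_insert]

noncomputable def quotientSpanSubstYEquiv (g : Polynomial R) (f : MvPolynomial (Fin 2) R) :
    (MvPolynomial (Fin 2) R ⧸
        Ideal.span {X 1 - Polynomial.aeval (X 0 : MvPolynomial (Fin 2) R) g, f}) ≃ₐ[R]
      Polynomial R ⧸ Ideal.span {substY g f} :=
  (Ideal.quotientEquivAlgOfEq R (ker_mk_comp_substY g f).symm).trans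
    (Ideal.quotientKerAlgEquivOfSurjective
      ((Ideal.Quotient.mkₐ_surjective R _).comp (substY_surjective g)))

end MvPolynomial

theorem q1_ne_zero : q1 ≠ 0 :=
  (map_ne_zero_iff _ (IsFractionRing.injective (MvPolynomial (Fin 2) ℚ) Kq)).mpr (X_ne_zero 0)

theorem four_mul_q1_ne_zero : 4 * q1 ≠ 0 :=
  mul_ne_zero (by norm_num) q1_ne_zero

noncomputable def yOfX : Polynomial Kq :=
  Polynomial.C (4 * q1)⁻¹ * Polynomial.X ^ 3 - Polynomial.X

theorem f1_eq : f1 = C (-(4 * q1)) * (X 1 - Polynomial.aeval (X 0) yOfX) := by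
  have h4q1 : (C 4 * C q1 * C (4 * q1)⁻¹ : MvPolynomial (Fin 2) Kq) = 1 := by
    rw [← C_mul, ← C_mul, mul_inv_cancel₀ four_mul_q1_ne_zero, C_1]
  simp only [f1, yOfX, map_sub, map_mul, map_pow, map_neg, Polynomial.aeval_X, Polynomial.aeval_C,
    algebraMap_eq]
  linear_combination -X 0 ^ 3 * h4q1

theorem span_f1_f2 :
    Ideal.span {f1, f2} = Ideal.span {X 1 - Polynomial.aeval (X 0) yOfX, f2} := by
  rw [Ideal.span_insert, Ideal.span_insert, f1_eq, Ideal.span_singleton_mul_left_unit]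
  exact (isUnit_iff_ne_zero.mpr (neg_ne_zero.mpr four_mul_q1_ne_zero)).map C

theorem natDegree_substY_f2 : (substY yOfX f2).natDegree = 9 := by
  simp only [substY, f2, yOfX, map_sub, map_mul, map_add, map_pow, aeval_X, aeval_C,
    Matrix.cons_val_zero, Matrix.cons_val_one, Polynomial.algebraMap_eq]
  compute_degree!
  exact q1_ne_zero

theorem verra_quantum_ring_dimension :
    Module.finrank Kq (MvPolynomial (Fin 2) Kq ⧸ Ideal.span {f1, f2}) = 9 := by
  rw [span_f1_f2, (quotientSpanSubstYEquiv yOfX f2).toLinearEquiv.finrank_eq,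
    finrank_quotient_span_eq_natDegree, natDegree_substY_f2]
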